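/- Let S be a bounded linear operator on a Hilbert space with Re⟨Su, u⟩ ≥ α‖u‖² for some α > 0 and all u, and let K be a compact operator on the same space. If T = S + K is injective on a closed subspace V, and additionally Im⟨Tu,u⟩ > 0 for all nonzero u ∈ V, then inf_{u ∈ V, ‖u‖=1} |⟨Tu, u⟩| > 0. -/

import Mathlib

open Filter Topology

/-- Bounded sequences in a Hilbert space admit weakly convergent subsequences. -/
lemma weak_subseq {H : Type*} [NormedAddCommGroup H] [InnerProductSpace ℂ H] [CompleteSpace H]
    (u : ℕ → H) (hb : ∀ n, ‖u n‖ ≤ 1) :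
    ∃ (φ : ℕ → ℕ) (x : H), StrictMono φ ∧
      ∀ w : H, Tendsto (fun n => (inner ℂ w (u (φ n)) : ℂ)) atTop (𝓝 (inner ℂ w x)) := by
  classical
  set M : Submodule ℂ H := (Submodule.span ℂ (Set.range u)).topologicalClosure with hM
  have hMclosed : IsClosed (M : Set H) := Submodule.isClosed_topologicalClosure _
  haveI : CompleteSpace M := hMclosed.completeSpace_coe
  have huM : ∀ n, u n ∈ M := fun n =>
    Submodule.le_topologicalClosure _ (Submodule.subset_span (Set.mem_range_self n))
  have hsep : TopologicalSpace.IsSeparable (M : Set H) := by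
    have h1 : TopologicalSpace.IsSeparable
        ((Submodule.span ℂ (Set.range u) : Submodule ℂ H) : Set H) :=
      (Set.countable_range u).isSeparable.span
    have h2 := h1.closure
    rwa [hM, Submodule.topologicalClosure_coe]
  obtain ⟨c, hcc, hMc⟩ := hsep
  obtain ⟨v, hv⟩ := (hcc.insert 0).exists_eq_range (Set.insert_nonempty _ _)
  have hMcv : (M : Set H) ⊆ closure (Set.range v) := by
    rw [← hv]; exact hMc.trans (closure_mono (Set.subset_insert _ _))
  -- diagonal extraction through a compact metrizable product
  have hcpt : IsCompact (Set.univ.pi fun k : ℕ => Metric.closedBall (0 : ℂ) ‖v k‖) :=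
    isCompact_univ_pi fun k => isCompact_closedBall _ _
  have hmem : ∀ n, (fun k => (inner ℂ (v k) (u n) : ℂ)) ∈
      Set.univ.pi fun k : ℕ => Metric.closedBall (0 : ℂ) ‖v k‖ := by
    intro n
    refine Set.mem_univ_pi.mpr fun k => ?_
    rw [Metric.mem_closedBall, dist_zero_right]
    calc ‖(inner ℂ (v k) (u n) : ℂ)‖ ≤ ‖v k‖ * ‖u n‖ := norm_inner_le_norm _ _
      _ ≤ ‖v k‖ * 1 := mul_le_mul_of_nonneg_left (hb n) (norm_nonneg _)
      _ = ‖v k‖ := mul_one _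
  obtain ⟨g, -, φ, hφ, hg⟩ := hcpt.tendsto_subseq hmem
  rw [tendsto_pi_nhds] at hg
  -- Cauchy against every vector
  have key : ∀ w : H, CauchySeq (fun n => (inner ℂ w (u (φ n)) : ℂ)) := by
    intro w
    set m : H := (M.orthogonalProjectionOnto w : H) with hm
    have hwm : ∀ n, (inner ℂ w (u n) : ℂ) = inner ℂ m (u n) := by
      intro n
      have h0 : (inner ℂ (w - m) (u n) : ℂ) = 0 := by
        rw [inner_eq_zero_symm]
        exact (Submodule.mem_orthogonal M _).mp
          (M.sub_starProjection_mem_orthogonal w) _ (huM n)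
      have h1 := inner_sub_left (𝕜 := ℂ) w m (u n)
      rw [h0] at h1
      exact (sub_eq_zero.mp h1.symm)
    have hmM : m ∈ closure (Set.range v) := hMcv (M.orthogonalProjectionOnto w).2
    have hC : CauchySeq (fun n => (inner ℂ m (u (φ n)) : ℂ)) := by
      rw [Metric.cauchySeq_iff]
      intro ε hε
      obtain ⟨b, ⟨k, rfl⟩, hbk⟩ := Metric.mem_closure_iff.mp hmM (ε / 3) (by linarith)
      obtain ⟨N, hN⟩ := Metric.cauchySeq_iff.mp (hg k).cauchySeq (ε / 3) (by linarith)
      refine ⟨N, fun p hp q hq => ?_⟩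
      have hsm : ∀ r : ℕ, ‖(inner ℂ (m - v k) (u (φ r)) : ℂ)‖ < ε / 3 := by
        intro r
        calc ‖(inner ℂ (m - v k) (u (φ r)) : ℂ)‖ ≤ ‖m - v k‖ * ‖u (φ r)‖ := norm_inner_le_norm _ _
          _ ≤ ‖m - v k‖ * 1 := mul_le_mul_of_nonneg_left (hb _) (norm_nonneg _)
          _ = dist m (v k) := by rw [mul_one, dist_eq_norm]
          _ < ε / 3 := hbk
      have hdec : (inner ℂ m (u (φ p)) : ℂ) - inner ℂ m (u (φ q)) =
          inner ℂ (m - v k) (u (φ p)) + ((inner ℂ (v k) (u (φ p)) : ℂ) - inner ℂ (v k) (u (φ q)))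
            + (inner ℂ (v k - m) (u (φ q)) : ℂ) := by
        simp only [inner_sub_left]
        ring
      rw [dist_eq_norm, hdec]
      have h2 : ‖(inner ℂ (v k) (u (φ p)) : ℂ) - inner ℂ (v k) (u (φ q))‖ < ε / 3 := by
        have := hN p hp q hq
        rwa [dist_eq_norm] at this
      have h3 : ‖(inner ℂ (v k - m) (u (φ q)) : ℂ)‖ < ε / 3 := by
        have hneg : v k - m = -(m - v k) := (neg_sub m (v k)).symm
        rw [hneg, inner_neg_left, norm_neg]
        exact hsm q
      calc ‖inner ℂ (m - v k) (u (φ p)) + ((inner ℂ (v k) (u (φ p)) : ℂ) - inner ℂ (v k) (u (φ q)))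
            + (inner ℂ (v k - m) (u (φ q)) : ℂ)‖
          ≤ ‖(inner ℂ (m - v k) (u (φ p)) : ℂ)‖ + ‖(inner ℂ (v k) (u (φ p)) : ℂ) - inner ℂ (v k) (u (φ q))‖
            + ‖(inner ℂ (v k - m) (u (φ q)) : ℂ)‖ := norm_add₃_le
        _ < ε / 3 + ε / 3 + ε / 3 := by
            have := hsm p
            linarith
        _ = ε := by ring
    have hfun : (fun n => (inner ℂ w (u (φ n)) : ℂ)) = fun n => inner ℂ m (u (φ n)) :=
      funext fun n => hwm (φ n)
    rw [hfun]
    exact hC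
  choose L hL using fun w => cauchySeq_tendsto_of_complete (key w)
  have hbound : ∀ w : H, ‖L w‖ ≤ ‖w‖ := by
    intro w
    refine le_of_tendsto (hL w).norm (Eventually.of_forall fun n => ?_)
    exact (norm_inner_le_norm _ _).trans (mul_le_of_le_one_right (norm_nonneg w) (hb _))
  have hadd : ∀ w₁ w₂ : H, L (w₁ + w₂) = L w₁ + L w₂ := by
    intro w₁ w₂
    refine tendsto_nhds_unique (hL (w₁ + w₂)) (((hL w₁).add (hL w₂)).congr fun n => ?_)
    exact (inner_add_left _ _ _).symm
  have hsmul : ∀ (a : ℂ) (w : H), L (a • w) = (starRingEnd ℂ) a * L w := by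
    intro a w
    refine tendsto_nhds_unique (hL (a • w)) (((hL w).const_mul _).congr fun n => ?_)
    exact (inner_smul_left _ _ _).symm
  let G : H →ₗ[ℂ] ℂ :=
    { toFun := fun w => (starRingEnd ℂ) (L w)
      map_add' := fun w₁ w₂ => by
        show (starRingEnd ℂ) (L (w₁ + w₂)) = (starRingEnd ℂ) (L w₁) + (starRingEnd ℂ) (L w₂)
        rw [hadd w₁ w₂, map_add]
      map_smul' := fun a w => by
        show (starRingEnd ℂ) (L (a • w)) = a • (starRingEnd ℂ) (L w)
        rw [hsmul a w, map_mul, Complex.conj_conj, smul_eq_mul] }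
  let G' : H →L[ℂ] ℂ := G.mkContinuous 1 (fun w => by
    rw [one_mul]
    show ‖(starRingEnd ℂ) (L w)‖ ≤ ‖w‖
    rw [RCLike.norm_conj]
    exact hbound w)
  set x : H := (InnerProductSpace.toDual ℂ H).symm G' with hx
  have hxw : ∀ w : H, (inner ℂ w x : ℂ) = L w := by
    intro w
    have h1 : (inner ℂ x w : ℂ) = G' w := InnerProductSpace.toDual_symm_apply
    have h2 : (inner ℂ w x : ℂ) = (starRingEnd ℂ) ((inner ℂ x w : ℂ)) := (inner_conj_symm _ _).symm
    rw [h2, h1]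
    show (starRingEnd ℂ) ((starRingEnd ℂ) (L w)) = L w
    exact Complex.conj_conj _
  exact ⟨φ, x, hφ, fun w => (hxw w) ▸ hL w⟩

theorem abstract_coercivity_on_subspace
    {H : Type*} [NormedAddCommGroup H] [InnerProductSpace ℂ H] [CompleteSpace H]
    (S K : H →L[ℂ] H) (hK : IsCompactOperator K)
    (α : ℝ) (hα : 0 < α) (hS : ∀ u : H, α * ‖u‖ ^ 2 ≤ (inner ℂ (S u) u : ℂ).re)
    (V : Submodule ℂ H) (hV : IsClosed (V : Set H))
    (hIm : ∀ u ∈ V, u ≠ 0 → 0 < (inner ℂ ((S + K) u) u : ℂ).im) :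
    ∃ c : ℝ, 0 < c ∧ ∀ u ∈ V, c * ‖u‖ ^ 2 ≤ ‖(inner ℂ ((S + K) u) u : ℂ)‖ := by
  by_contra hcon
  push_neg at hcon
  set T : H →L[ℂ] H := S + K with hT
  choose w hwV hwlt using fun n : ℕ => hcon (1 / ((n : ℝ) + 1)) (by positivity)
  have hw0 : ∀ n, w n ≠ 0 := by
    intro n h
    simpa [h] using hwlt n
  set v : ℕ → H := fun n => ((‖w n‖ : ℂ))⁻¹ • w n with hv
  have hvV : ∀ n, v n ∈ V := fun n => V.smul_mem _ (hwV n)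
  have hwn0 : ∀ n, ‖w n‖ ≠ 0 := fun n => norm_ne_zero_iff.mpr (hw0 n)
  have hvn : ∀ n, ‖v n‖ = 1 := by
    intro n
    rw [hv]
    simp only [norm_smul, norm_inv, Complex.norm_real, Real.norm_eq_abs,
      abs_of_nonneg (norm_nonneg (w n))]
    exact inv_mul_cancel₀ (hwn0 n)
  have hvlt : ∀ n, ‖(inner ℂ (T (v n)) (v n) : ℂ)‖ < 1 / ((n : ℝ) + 1) := by
    intro n
    have e : (inner ℂ (T (v n)) (v n) : ℂ)
        = (starRingEnd ℂ) ((‖w n‖ : ℂ))⁻¹ * (((‖w n‖ : ℂ))⁻¹ * inner ℂ (T (w n)) (w n)) := by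
      rw [hv]
      simp only [map_smul, inner_smul_left, inner_smul_right]
      ring
    have hcn : ‖(((‖w n‖ : ℝ) : ℂ))⁻¹‖ = ‖w n‖⁻¹ := by
      simp [abs_of_nonneg (norm_nonneg (w n))]
    have hp : (0 : ℝ) < ‖w n‖⁻¹ := inv_pos.mpr (norm_pos_iff.mpr (hw0 n))
    rw [e, norm_mul, norm_mul, RCLike.norm_conj, hcn]
    calc ‖w n‖⁻¹ * (‖w n‖⁻¹ * ‖(inner ℂ (T (w n)) (w n) : ℂ)‖)
        < ‖w n‖⁻¹ * (‖w n‖⁻¹ * (1 / ((n : ℝ) + 1) * ‖w n‖ ^ 2)) := by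
          exact mul_lt_mul_of_pos_left (mul_lt_mul_of_pos_left (hwlt n) hp) hp
      _ = (‖w n‖⁻¹ * ‖w n‖⁻¹ * ‖w n‖ ^ 2) * (1 / ((n : ℝ) + 1)) := by ring
      _ = 1 / ((n : ℝ) + 1) := by
          have h4 : ‖w n‖⁻¹ * ‖w n‖⁻¹ * ‖w n‖ ^ 2 = 1 := by
            have := hwn0 n
            field_simp
          rw [h4, one_mul]
  have htend0 : Tendsto (fun n => (inner ℂ (T (v n)) (v n) : ℂ)) atTop (𝓝 0) :=
    squeeze_zero_norm (fun n => le_of_lt (hvlt n)) tendsto_one_div_add_atTop_nhds_zero_nat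
  obtain ⟨φ, x, hφ, hwp⟩ := weak_subseq v fun n => le_of_eq (hvn n)
  -- compactness of K : extract a further subsequence with K (v (φ (ψ n))) convergent
  have hcpt : IsCompact (closure ((K : H →ₗ[ℂ] H) '' Metric.closedBall 0 1)) :=
    IsCompactOperator.isCompact_closure_image_closedBall (𝕜₁ := ℂ) hK 1
  have hmem : ∀ n, K (v (φ n)) ∈ closure ((K : H →ₗ[ℂ] H) '' Metric.closedBall 0 1) := by
    intro n
    refine subset_closure (Set.mem_image_of_mem _ ?_)
    rw [Metric.mem_closedBall, dist_zero_right, hvn]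
  obtain ⟨y, -, ψ, hψ, hKy⟩ := hcpt.tendsto_subseq hmem
  set q : ℕ → H := fun n => v (φ (ψ n)) with hq
  have hqV : ∀ n, q n ∈ V := fun n => hvV _
  have hqn : ∀ n, ‖q n‖ = 1 := fun n => hvn _
  have hwq : ∀ z : H, Tendsto (fun n => (inner ℂ z (q n) : ℂ)) atTop (𝓝 (inner ℂ z x)) :=
    fun z => (hwp z).comp hψ.tendsto_atTop
  have hTq : Tendsto (fun n => (inner ℂ (T (q n)) (q n) : ℂ)) atTop (𝓝 0) :=
    htend0.comp ((hφ.comp hψ).tendsto_atTop)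
  -- identify the limit of K (q n)
  have hyKx : y = K x := by
    refine ext_inner_left ℂ fun z => ?_
    have h1 : Tendsto (fun n => (inner ℂ z (K (q n)) : ℂ)) atTop (𝓝 (inner ℂ z y)) :=
      tendsto_const_nhds.inner hKy
    have h2 : Tendsto (fun n => (inner ℂ z (K (q n)) : ℂ)) atTop (𝓝 (inner ℂ z (K x))) := by
      have h3 := hwq ((ContinuousLinearMap.adjoint K) z)
      simp only [ContinuousLinearMap.adjoint_inner_left] at h3
      exact h3
    exact tendsto_nhds_unique h1 h2
  rw [hyKx] at hKy
  -- inner ℂ (K q n) (q n) → inner ℂ (K x) x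
  have hKdiff : Tendsto (fun n => K (q n) - K x) atTop (𝓝 0) := by
    simpa using hKy.sub (tendsto_const_nhds (x := K x))
  have hKnorm : Tendsto (fun n => ‖K (q n) - K x‖) atTop (𝓝 0) := by
    simpa using hKdiff.norm
  have hfirst : Tendsto (fun n => (inner ℂ (K (q n) - K x) (q n) : ℂ)) atTop (𝓝 0) := by
    refine squeeze_zero_norm (fun n => ?_) hKnorm
    exact (norm_inner_le_norm _ _).trans
      (mul_le_of_le_one_right (norm_nonneg _) (le_of_eq (hqn n)))
  have hKinner : Tendsto (fun n => (inner ℂ (K (q n)) (q n) : ℂ)) atTop (𝓝 (inner ℂ (K x) x)) := by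
    have h := hfirst.add (hwq (K x))
    rw [zero_add] at h
    refine h.congr fun n => ?_
    rw [inner_sub_left]
    ring
  -- coercivity of S forces x ≠ 0
  have hSq : Tendsto (fun n => ((inner ℂ (S (q n)) (q n) : ℂ)).re) atTop
      (𝓝 ((0 - (inner ℂ (K x) x : ℂ)).re)) := by
    have h := (hTq.sub hKinner)
    have h2 := (Complex.continuous_re.tendsto _).comp h
    refine h2.congr fun n => ?_
    simp only [Function.comp_apply]
    congr 1
    rw [hT]
    simp only [ContinuousLinearMap.add_apply, inner_add_left]
    ring
  have hre : α ≤ (0 - (inner ℂ (K x) x : ℂ)).re := by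
    refine ge_of_tendsto hSq (Eventually.of_forall fun n => ?_)
    have := hS (q n)
    rwa [hqn n, one_pow, mul_one] at this
  have hx0 : x ≠ 0 := by
    intro h
    rw [h] at hre
    simp at hre
    linarith
  -- x ∈ V since V is weakly closed
  haveI : CompleteSpace V := hV.completeSpace_coe
  have hxV : x ∈ V := by
    rw [← Submodule.orthogonal_orthogonal V, Submodule.mem_orthogonal]
    intro z hz
    have hz0 : ∀ n, (inner ℂ z (q n) : ℂ) = 0 := fun n => by
      rw [inner_eq_zero_symm]
      exact (Submodule.mem_orthogonal V z).mp hz _ (hqV n)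
    have h0 : Tendsto (fun n => (inner ℂ z (q n) : ℂ)) atTop (𝓝 0) := by
      simp only [hz0]
      exact tendsto_const_nhds
    exact tendsto_nhds_unique (hwq z) h0
  -- cross terms
  have hcross1 : Tendsto (fun n => (inner ℂ (T (q n)) x : ℂ)) atTop (𝓝 (inner ℂ (T x) x)) := by
    have h := (Complex.continuous_conj.tendsto _).comp (hwq ((ContinuousLinearMap.adjoint T) x))
    have e1 : ∀ z : H, (starRingEnd ℂ) ((inner ℂ ((ContinuousLinearMap.adjoint T) x) z : ℂ))
        = inner ℂ (T z) x := by
      intro z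
      rw [inner_conj_symm, ContinuousLinearMap.adjoint_inner_right]
    simp only [e1] at h
    exact h.congr fun n => e1 (q n)
  have hcross2 : Tendsto (fun n => (inner ℂ (T x) (q n) : ℂ)) atTop (𝓝 (inner ℂ (T x) x)) :=
    hwq (T x)
  have hexp : ∀ n, (inner ℂ (T (q n - x)) (q n - x) : ℂ)
      = inner ℂ (T (q n)) (q n) - inner ℂ (T (q n)) x - inner ℂ (T x) (q n) + inner ℂ (T x) x := by
    intro n
    rw [map_sub, inner_sub_left, inner_sub_right, inner_sub_right]
    ring
  have hlim : Tendsto (fun n => (inner ℂ (T (q n - x)) (q n - x) : ℂ)) atTop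
      (𝓝 (-(inner ℂ (T x) x : ℂ))) := by
    have h := ((hTq.sub hcross1).sub hcross2).add
      (tendsto_const_nhds (x := (inner ℂ (T x) x : ℂ)))
    have h2 := h.congr fun n => (hexp n).symm
    convert h2 using 2
    ring
  have him : ∀ n, 0 ≤ ((inner ℂ (T (q n - x)) (q n - x) : ℂ)).im := by
    intro n
    rcases eq_or_ne (q n - x) 0 with h | h
    · simp [h]
    · exact le_of_lt (hIm _ (Submodule.sub_mem V (hqV n) hxV) h)
  have h1 : Tendsto (fun n => ((inner ℂ (T (q n - x)) (q n - x) : ℂ)).im) atTop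
      (𝓝 ((-(inner ℂ (T x) x : ℂ)).im)) :=
    (Complex.continuous_im.tendsto _).comp hlim
  have h2 : 0 ≤ (-(inner ℂ (T x) x : ℂ)).im := ge_of_tendsto h1 (Eventually.of_forall him)
  have h3 := hIm x hxV hx0
  rw [Complex.neg_im] at h2
  linarith
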